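/- arXiv:2208.05149 — 2 statements merged into one kernel-verified Lean document; each statement's English description precedes it below -/
import Mathlib

section
/- For all positive integers m and n with m + n odd, the reciprocity relation (-1)^n · R(-m,-n) + (-1)^m · R(-n,-m) = m!·n!/(m+n+1)! holds. -/
/-- `R (-m, -n)` from the paper: the residue
`(-1)^n m! n! / (m+n+1)! + ∑_{k even, 1 ≤ k ≤ n} C(n,k) ζ(k-m-n)`. -/
noncomputable def RRes (m n : ℕ) : ℂ :=
  (-1) ^ n * ((m.factorial : ℂ) * n.factorial / (m + n + 1).factorial) +
    ∑ k ∈ (Finset.range (n + 1)).filter (fun k => 1 ≤ k ∧ Even k),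
      (n.choose k : ℂ) * riemannZeta ((k : ℂ) - m - n)

/-!
Write `S(m, n) = ∑_{k ≤ n} C(n,k) B_{m+k+1} / (m+k+1)`. Since `ζ(-j) = -B'_{j+1} / (j+1)` and
`ζ` vanishes at the negative even integers,
`R(-m,-n) = (-1)^n m! n! / (m+n+1)! - S(m,n) - ζ(-m-n)` for `m ≥ 1`, `m + n` odd; so the
theorem is Carlitz's reciprocity
`S(m,n) + (-1)^(m+n) S(n,m) = (-1)^(m+1) m! n! / (m+n+1)!`.

`S(m,n)` is the value at `0` of `A_{m,n}(x) = ∑_{k ≤ n} C(n,k) B_{m+k+1}(x) / (m+k+1)`, an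
antidifference of `x^m (1+x)^n`. Hence `A_{m,n}(x) + (-1)^(m+n) A_{n,m}(-x)` is `1`-periodic,
so constant, and its value is its integral over `[0,1]`: the Bernoulli polynomials integrate to
`0`, and `x ↦ 1 - x` turns `∫ A_{n,m}(-x) dx` into the Beta integral `∫ x^n (1-x)^m dx`.
-/

open Finset Polynomial
open scoped Nat

namespace Polynomial

variable {K : Type*} [Field K]

/-- `p ↦ ∫₀¹ p(x) dx`, defined on coefficients so that it makes sense over any field. -/
noncomputable def unitIntegral : K[X] →ₗ[K] K :=
  lsum fun k => ((k : K) + 1)⁻¹ • LinearMap.id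

@[simp]
lemma unitIntegral_monomial (k : ℕ) (a : K) : unitIntegral (monomial k a) = a / (k + 1) := by
  simp [unitIntegral, div_eq_inv_mul]

@[simp]
lemma unitIntegral_C (a : K) : unitIntegral (C a) = a := by
  simpa using unitIntegral_monomial 0 a

@[simp]
lemma unitIntegral_C_mul (a : K) (p : K[X]) : unitIntegral (C a * p) = a * unitIntegral p := by
  rw [← smul_eq_C_mul, map_smul, smul_eq_mul]

lemma unitIntegral_derivative [CharZero K] (p : K[X]) :
    unitIntegral (derivative p) = p.eval 1 - p.eval 0 := by
  induction p using Polynomial.induction_on' with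
  | add p q hp hq => simp only [map_add, hp, hq, eval_add]; ring
  | monomial k a =>
    rcases k with _ | k
    · simp
    · have : (k : K) + 1 ≠ 0 := Nat.cast_add_one_ne_zero k
      rw [derivative_monomial_succ, unitIntegral_monomial, eval_monomial, eval_monomial, one_pow,
        zero_pow k.succ_ne_zero, mul_one, mul_zero, sub_zero]
      field_simp

@[simp]
lemma unitIntegral_X_pow (k : ℕ) : unitIntegral (X ^ k : K[X]) = 1 / (k + 1) := by
  rw [← monomial_one_right_eq_X_pow, unitIntegral_monomial]

lemma derivative_X_pow_mul_one_sub_X_pow (a b : ℕ) :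
    derivative (X ^ (a + 1) * (1 - X) ^ (b + 1) : K[X]) =
      C ((a : K) + 1) * (X ^ a * (1 - X) ^ (b + 1)) -
        C ((b : K) + 1) * (X ^ (a + 1) * (1 - X) ^ b) := by
  simp only [derivative_mul, derivative_pow, derivative_sub, derivative_one, derivative_X,
    map_add, map_natCast, map_one, Nat.add_sub_cancel, Nat.cast_add, Nat.cast_one]
  ring

lemma unitIntegral_X_pow_mul_one_sub_X_pow [CharZero K] (a b : ℕ) :
    unitIntegral (X ^ a * (1 - X) ^ b : K[X]) = a ! * b ! / (a + b + 1)! := by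
  induction b generalizing a with
  | zero =>
    have : (a ! : K) ≠ 0 := Nat.cast_ne_zero.mpr (Nat.factorial_ne_zero a)
    rw [pow_zero, mul_one, unitIntegral_X_pow, Nat.factorial_zero, add_zero, Nat.factorial_succ]
    push_cast
    field_simp
  | succ b ih =>
    have hparts := unitIntegral_derivative (X ^ (a + 1) * (1 - X) ^ (b + 1) : K[X])
    rw [derivative_X_pow_mul_one_sub_X_pow, map_sub, unitIntegral_C_mul, unitIntegral_C_mul,
      ih (a + 1), show a + 1 + b + 1 = a + (b + 1) + 1 by ring] at hparts
    simp only [eval_mul, eval_pow, eval_X, eval_sub, eval_one, sub_self,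
      zero_pow (Nat.succ_ne_zero _), mul_zero, zero_mul, sub_zero] at hparts
    rw [Nat.factorial_succ a] at hparts
    rw [Nat.factorial_succ b]
    push_cast at hparts ⊢
    apply mul_left_cancel₀ (Nat.cast_add_one_ne_zero a : (a : K) + 1 ≠ 0)
    linear_combination hparts

lemma unitIntegral_comp_one_sub_X [CharZero K] (p : K[X]) :
    unitIntegral (p.comp (1 - X)) = unitIntegral p := by
  induction p using Polynomial.induction_on' with
  | add p q hp hq => rw [add_comp, map_add, map_add, hp, hq]
  | monomial k a =>
    have hbeta := unitIntegral_X_pow_mul_one_sub_X_pow (K := K) 0 k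
    rw [pow_zero, one_mul, Nat.factorial_zero, zero_add, Nat.factorial_succ] at hbeta
    have : (k ! : K) ≠ 0 := Nat.cast_ne_zero.mpr (Nat.factorial_ne_zero k)
    rw [← C_mul_X_pow_eq_monomial, mul_comp, C_comp, X_pow_comp, unitIntegral_C_mul, hbeta,
      unitIntegral_C_mul, unitIntegral_X_pow]
    push_cast
    field_simp

lemma eq_C_eval_zero_of_eval_one_add [CharZero K] {p : K[X]}
    (h : ∀ x, p.eval (1 + x) = p.eval x) : p = C (p.eval 0) := by
  have hnat (n : ℕ) : p.eval (n : K) = p.eval 0 := by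
    induction n with
    | zero => rw [Nat.cast_zero]
    | succ n ih => rw [Nat.cast_succ, add_comm, h, ih]
  refine eq_of_infinite_eval_eq _ _ (Set.infinite_of_injective_forall_mem Nat.cast_injective ?_)
  intro n
  simpa using hnat n

end Polynomial

lemma neg_one_pow_sq {R : Type*} [Monoid R] [HasDistribNeg R] (n : ℕ) :
    ((-1 : R) ^ n) ^ 2 = 1 := by
  rw [← pow_mul, pow_mul', neg_one_sq, one_pow]

noncomputable def bernoulliAntidiff (a b : ℕ) : ℚ[X] :=
  ∑ k ∈ range (b + 1), C ((b.choose k : ℚ) / (a + k + 1)) * Polynomial.bernoulli (a + k + 1)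

lemma bernoulliAntidiff_eval_one_add (a b : ℕ) (x : ℚ) :
    (bernoulliAntidiff a b).eval (1 + x) =
      (bernoulliAntidiff a b).eval x + x ^ a * (1 + x) ^ b := by
  have hbinom : (1 + x) ^ b = ∑ k ∈ range (b + 1), (b.choose k : ℚ) * x ^ k := by
    rw [add_comm, add_pow]
    exact sum_congr rfl fun k _ => by ring
  simp only [bernoulliAntidiff, eval_finsetSum, eval_mul, eval_C, bernoulli_eval_one_add,
    hbinom, mul_sum, ← sum_add_distrib]
  refine sum_congr rfl fun k _ => ?_
  have : (a : ℚ) + k + 1 ≠ 0 := by positivity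
  push_cast
  field_simp
  ring

lemma unitIntegral_bernoulli {k : ℕ} (hk : k ≠ 0) :
    unitIntegral (Polynomial.bernoulli k) = 0 := by
  have hftc := unitIntegral_derivative (Polynomial.bernoulli (k + 1))
  have hends := bernoulli_eval_one_add (k + 1) 0
  rw [add_zero, Nat.add_sub_cancel, zero_pow hk, mul_zero, add_zero] at hends
  rw [derivative_bernoulli_add_one, ← Nat.cast_succ, ← C_eq_natCast, unitIntegral_C_mul, hends,
    sub_self] at hftc
  exact (mul_eq_zero.mp hftc).resolve_left (Nat.cast_ne_zero.mpr k.succ_ne_zero)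

lemma unitIntegral_bernoulliAntidiff (a b : ℕ) : unitIntegral (bernoulliAntidiff a b) = 0 := by
  simp [bernoulliAntidiff, unitIntegral_bernoulli]

lemma unitIntegral_bernoulliAntidiff_comp_neg_X (a b : ℕ) :
    unitIntegral ((bernoulliAntidiff a b).comp (-X)) =
      (-1) ^ (a + 1) * (a ! * b ! / (a + b + 1)!) := by
  have hreflect : (bernoulliAntidiff a b).comp (-X) =
      (bernoulliAntidiff a b).comp (1 - X) - C ((-1) ^ a) * (X ^ a * (1 - X) ^ b) := by
    refine Polynomial.funext fun x => ?_
    have hshift := bernoulliAntidiff_eval_one_add a b (-x)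
    simp only [eval_comp, eval_sub, eval_neg, eval_one, eval_X, eval_mul, eval_C, eval_pow,
      ← sub_eq_add_neg] at hshift ⊢
    rw [hshift, neg_pow x]
    ring
  rw [hreflect, map_sub, unitIntegral_comp_one_sub_X, unitIntegral_bernoulliAntidiff,
    unitIntegral_C_mul, unitIntegral_X_pow_mul_one_sub_X_pow]
  ring

theorem bernoulliAntidiff_reciprocity (m n : ℕ) :
    (bernoulliAntidiff m n).eval 0 + (-1) ^ (m + n) * (bernoulliAntidiff n m).eval 0 =
      (-1) ^ (m + 1) * (m ! * n ! / (m + n + 1)!) := by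
  set ε : ℚ := (-1) ^ (m + n) with hε
  have hε_sq : ε ^ 2 = 1 := neg_one_pow_sq (m + n)
  set D := bernoulliAntidiff m n + C ε * (bernoulliAntidiff n m).comp (-X) with hD
  have hperiodic (x : ℚ) : D.eval (1 + x) = D.eval x := by
    have hshift := bernoulliAntidiff_eval_one_add n m (-1 - x)
    rw [show 1 + (-1 - x) = -x by ring, show -1 - x = -(1 + x) by ring, neg_pow, neg_pow x]
      at hshift
    simp only [hD, eval_add, eval_mul, eval_C, eval_comp, eval_neg, eval_X,
      bernoulliAntidiff_eval_one_add, hshift]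
    linear_combination (-(x ^ m * (1 + x) ^ n)) * hε_sq
  have hconst := congrArg unitIntegral (eq_C_eval_zero_of_eval_one_add hperiodic)
  rw [unitIntegral_C, hD, map_add, unitIntegral_C_mul, unitIntegral_bernoulliAntidiff,
    unitIntegral_bernoulliAntidiff_comp_neg_X, eval_add, eval_mul, eval_C, eval_comp, eval_neg,
    eval_X, neg_zero, add_comm n m, hε] at hconst
  rw [pow_add, pow_succ] at hconst
  rw [pow_succ]
  linear_combination
    -hconst - (-1) ^ m * (m ! * n ! / (m + n + 1)! : ℚ) * neg_one_pow_sq (R := ℚ) n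

lemma bernoulliAntidiff_eval_zero_eq_neg_sum_riemannZeta {m : ℕ} (hm : m ≠ 0) (n : ℕ) :
    (((bernoulliAntidiff m n).eval 0 : ℚ) : ℂ) =
      -∑ k ∈ range (n + 1), (n.choose k : ℂ) * riemannZeta (-(m + k : ℕ)) := by
  simp only [bernoulliAntidiff, eval_finsetSum, eval_mul, eval_C, bernoulli_eval_zero]
  push_cast
  rw [← sum_neg_distrib]
  refine sum_congr rfl fun k _ => ?_
  rw [← Nat.cast_add, riemannZeta_neg_nat_eq_bernoulli',
    bernoulli_eq_bernoulli'_of_ne_one (by omega)]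
  push_cast
  ring

lemma sum_filter_even_choose_mul_riemannZeta {m n : ℕ} (hm : 1 ≤ m) (hodd : Odd (m + n)) :
    ∑ k ∈ (range (n + 1)).filter (fun k => 1 ≤ k ∧ Even k),
        (n.choose k : ℂ) * riemannZeta ((k : ℂ) - m - n) =
      ∑ k ∈ range (n + 1), (n.choose k : ℂ) * riemannZeta (-(m + k : ℕ)) -
        riemannZeta (-(m + n : ℕ)) := by
  have hterm (k : ℕ) (hk : k ∈ range (n + 1)) :
      (if 1 ≤ k ∧ Even k then (n.choose k : ℂ) * riemannZeta ((k : ℂ) - m - n) else 0) =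
        (n.choose k : ℂ) * riemannZeta (-(m + (n - k) : ℕ)) -
          if k = 0 then riemannZeta (-(m + n : ℕ)) else 0 := by
    have hkn : k ≤ n := Nat.lt_succ_iff.mp (mem_range.mp hk)
    rcases Nat.eq_zero_or_pos k with rfl | hk0
    · simp
    rcases Nat.even_or_odd k with hk_even | ⟨s, hs⟩
    · rw [if_pos ⟨hk0, hk_even⟩, if_neg hk0.ne', sub_zero]
      push_cast [Nat.cast_sub hkn]
      ring_nf
    · obtain ⟨r, hr⟩ := hodd
      obtain ⟨j, hj⟩ : ∃ j, m + (n - k) = 2 * (j + 1) := ⟨r - s - 1, by omega⟩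
      have hk_odd : ¬Even k := Nat.not_even_iff_odd.mpr ⟨s, hs⟩
      rw [if_neg fun h => hk_odd h.2, if_neg hk0.ne', hj]
      push_cast
      rw [← neg_mul, riemannZeta_neg_two_mul_nat_add_one]
      simp
  have hreflect : ∑ k ∈ range (n + 1), (n.choose k : ℂ) * riemannZeta (-(m + (n - k) : ℕ)) =
      ∑ k ∈ range (n + 1), (n.choose k : ℂ) * riemannZeta (-(m + k : ℕ)) := by
    refine Eq.trans (sum_congr rfl fun k hk => ?_) (sum_range_reflect _ (n + 1))
    rw [Nat.add_sub_cancel, Nat.choose_symm (Nat.lt_succ_iff.mp (mem_range.mp hk))]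
  rw [sum_filter, sum_congr rfl hterm, sum_sub_distrib, hreflect, sum_ite_eq' (range (n + 1)) 0,
    if_pos (mem_range.mpr n.succ_pos)]

lemma RRes_eq {m n : ℕ} (hm : 1 ≤ m) (hodd : Odd (m + n)) :
    RRes m n = (-1) ^ n * (m ! * n ! / (m + n + 1)!) -
      (((bernoulliAntidiff m n).eval 0 : ℚ) : ℂ) - riemannZeta (-(m + n : ℕ)) := by
  rw [RRes, sum_filter_even_choose_mul_riemannZeta hm hodd,
    bernoulliAntidiff_eval_zero_eq_neg_sum_riemannZeta (by omega)]
  ring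

/-- Reciprocity relation for the residues `R(-m,-n)`:
for `m, n ≥ 1` with `m + n` odd,
`(-1)^n R(-m,-n) + (-1)^m R(-n,-m) = m! n! / (m+n+1)!`. -/
theorem RRes_reciprocity (m n : ℕ) (hm : 1 ≤ m) (hn : 1 ≤ n) (hodd : Odd (m + n)) :
    (-1 : ℂ) ^ n * RRes m n + (-1 : ℂ) ^ m * RRes n m
      = (m.factorial : ℂ) * n.factorial / (m + n + 1).factorial := by
  have hn_sq : ((-1 : ℂ) ^ n) ^ 2 = 1 := neg_one_pow_sq n
  have hm_sign : (-1 : ℂ) ^ m = -(-1) ^ n := by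
    have h := hodd.neg_one_pow (α := ℂ)
    rw [pow_add] at h
    linear_combination (-1) ^ n * h - (-1) ^ m * hn_sq
  have hcarlitz := congrArg (Rat.cast : ℚ → ℂ) (bernoulliAntidiff_reciprocity m n)
  rw [hodd.neg_one_pow] at hcarlitz
  push_cast at hcarlitz
  rw [pow_succ, hm_sign] at hcarlitz
  rw [RRes_eq hm hodd, RRes_eq hn (by rwa [add_comm]), add_comm n m, hm_sign]
  linear_combination (-(-1) ^ n) * hcarlitz + (m ! * n ! / (m + n + 1)! : ℂ) * hn_sq
end

section
/- For every integer N ≥ 1, −B_{2N+2}/(2N+2) + Σ_{h=0}^{N} C(2N,2h) · B_{2h+2}/(2h+2) = (2N)!/(2N+2)! = 1/((2N+1)(2N+2)). -/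
/-!
Because `B_k = 0` for odd `k ≥ 3`, the sum over even indices is the full sum
`∑_{k ≤ n} C(n,k) B_{k+2}/(k+2)` with `n = 2N`. The identity
`C(n,k)/(k+2) = ((n+2) C(n+1,k+1) - C(n+2,k+2)) / ((n+1)(n+2))` reduces that sum to two instances
of the recurrence `∑_{k<m} C(m,k) B_k = m`, which give
`B_{n+2}/(n+2) - B_{n+1}/(n+1) + 1/((n+1)(n+2))`; for `n = 2N` the middle term vanishes.
-/

open Finset

lemma sum_range_succ_choose_mul_bernoulli' (n : ℕ) :
    ∑ k ∈ range (n + 1), (n.choose k : ℚ) * bernoulli' k = n + bernoulli' n := by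
  rw [sum_range_succ, sum_bernoulli', Nat.choose_self, Nat.cast_one, one_mul]

lemma sum_range_choose_mul_bernoulli'_succ (n : ℕ) :
    ∑ k ∈ range (n + 1), (n.choose k : ℚ) * bernoulli' (k + 1)
      = 1 + bernoulli' (n + 1) - bernoulli' n := by
  have upper := sum_range_succ_choose_mul_bernoulli' (n + 1)
  have lower := sum_range_succ (fun k => (n.choose k : ℚ) * bernoulli' k) (n + 1)
  rw [sum_range_succ'] at upper
  rw [sum_range_succ', sum_range_succ_choose_mul_bernoulli', Nat.choose_succ_self] at lower
  simp only [Nat.choose_succ_succ', Nat.cast_add, add_mul, sum_add_distrib] at upper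
  simp only [Nat.choose_zero_right, bernoulli'_zero, Nat.cast_zero, Nat.cast_one] at upper lower
  linarith

lemma choose_div_add_two (n k : ℕ) :
    (n.choose k : ℚ) / (k + 2)
      = ((n + 2) * (n + 1).choose (k + 1) - (n + 2).choose (k + 2)) / ((n + 1) * (n + 2)) := by
  have h₁ : ((n + 1 : ℕ) : ℚ) * n.choose k
      = (n + 1).choose (k + 1) * ((k + 1 : ℕ) : ℚ) := by
    exact_mod_cast Nat.add_one_mul_choose_eq n k
  have h₂ : ((n + 2 : ℕ) : ℚ) * (n + 1).choose (k + 1)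
      = (n + 2).choose (k + 2) * ((k + 2 : ℕ) : ℚ) := by
    exact_mod_cast Nat.add_one_mul_choose_eq (n + 1) (k + 1)
  push_cast at h₁ h₂
  rw [div_eq_div_iff (by positivity) (by positivity)]
  linear_combination (n + 2 : ℚ) * h₁ - h₂

lemma sum_range_choose_mul_bernoulli'_add_two_div (n : ℕ) :
    ∑ k ∈ range (n + 1), (n.choose k : ℚ) * bernoulli' (k + 2) / (k + 2)
      = bernoulli' (n + 2) / (n + 2) - bernoulli' (n + 1) / (n + 1)
        + 1 / ((n + 1) * (n + 2)) := by
  have shifted := sum_range_choose_mul_bernoulli'_succ (n + 1)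
  have full := sum_range_succ_choose_mul_bernoulli' (n + 2)
  rw [sum_range_succ'] at shifted
  rw [sum_range_succ', sum_range_succ'] at full
  simp only [mul_div_right_comm _ (bernoulli' _), choose_div_add_two, sub_mul,
    div_mul_eq_mul_div, ← sum_div, sum_sub_distrib, mul_assoc, ← mul_sum]
  simp only [zero_add, Nat.choose_zero_right, Nat.choose_one_right, bernoulli'_zero,
    bernoulli'_one, Nat.cast_one, Nat.cast_add, Nat.cast_ofNat] at shifted full
  field_simp
  linear_combination (n + 2 : ℚ) * shifted - full

lemma sum_range_two_mul_add_one_eq_sum_even {M : Type*} [AddCommMonoid M] (f : ℕ → M)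
    (hf : ∀ i, f (2 * i + 1) = 0) (N : ℕ) :
    ∑ k ∈ range (2 * N + 1), f k = ∑ i ∈ range (N + 1), f (2 * i) := by
  induction N with
  | zero => simp
  | succ N ih =>
    rw [sum_range_succ _ (N + 1), ← ih, mul_add_one, sum_range_succ, sum_range_succ, hf, add_zero]

/-- For every integer `N ≥ 1`,
`-B_{2N+2}/(2N+2) + ∑_{h=0}^{N} C(2N,2h) B_{2h+2}/(2h+2) = (2N)!/(2N+2)! = 1/((2N+1)(2N+2))`
(with the convention `B₁ = 1/2`, i.e. Mathlib's `bernoulli'`). -/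
theorem bernoulli_even_sum (N : ℕ) (hN : 1 ≤ N) :
    (-(bernoulli' (2 * N + 2)) / (2 * N + 2)
        + ∑ h ∈ Finset.range (N + 1),
            ((2 * N).choose (2 * h) : ℚ) * bernoulli' (2 * h + 2) / (2 * h + 2)
      = ((2 * N).factorial : ℚ) / (2 * N + 2).factorial)
    ∧ ((2 * N).factorial : ℚ) / (2 * N + 2).factorial
        = 1 / ((2 * (N : ℚ) + 1) * (2 * N + 2)) := by
  have hfact : ((2 * N).factorial : ℚ) / (2 * N + 2).factorial
      = 1 / ((2 * (N : ℚ) + 1) * (2 * N + 2)) := by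
    rw [Nat.factorial_succ, Nat.factorial_succ]
    push_cast
    field_simp
    ring
  refine ⟨?_, hfact⟩
  have hodd : bernoulli' (2 * N + 1) = 0 :=
    bernoulli'_eq_zero_of_odd (odd_two_mul_add_one N) (by omega)
  have heven := sum_range_two_mul_add_one_eq_sum_even
    (fun k => ((2 * N).choose k : ℚ) * bernoulli' (k + 2) / (k + 2))
    (fun i => by rw [bernoulli'_eq_zero_of_odd ⟨i + 1, by ring⟩ (by omega), mul_zero, zero_div])
    N
  rw [sum_range_choose_mul_bernoulli'_add_two_div] at heven
  push_cast at heven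
  rw [hfact, ← heven, hodd]
  ring
end
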